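/- arXiv:1209.5052 — 3 statements merged into one kernel-verified Lean document; each statement's English description precedes it below -/
import Mathlib

section
/- Let G' be the non-uniform replacement product of G and 𝓗, with rotation-map permutation matrix R_G and block-diagonal matrix J_𝓗 whose block for vertex u is the deg_G(u) × deg_G(u) all-1/deg_G(u) matrix. Define P := (1/2)·J_𝓗(I + R_G)J_𝓗. Then for all vertices (u,i), (v,j) of G', the entry P_{(u,i),(v,j)} equals W_G(u,v)/deg_G(v), where W_G = (I + D_G^{-1}A_G)/2 is the lazy random walk matrix of G. -/
/-!
`J_𝓗` averages over clouds, so `(J_𝓗 M J_𝓗)_{(u,i),(v,j)}` is the sum of `M` over the block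
`cloud u × cloud v`, divided by `deg u · deg v`. That block sum is `deg u · [u = v]` for `M = I`,
and for `M = R_G` it counts the ports of `u` that the rotation map sends into the cloud of `v`,
which is `[u ~ v]`.
-/

open Finset

/-- Vertices of the non-uniform replacement product: a cloud `Fin (deg u)` per vertex `u`. -/
abbrev RPVert {V : Type*} [Fintype V] (G : SimpleGraph V) [DecidableRel G.Adj] :=
  Σ u : V, Fin (G.degree u)

namespace Matrix

variable {ι : Type*} {β : ι → Type*} [∀ a, Fintype (β a)] {R : Type*}

def blockSum [AddCommMonoid R] (M : Matrix (Σ a, β a) (Σ a, β a) R) (a b : ι) : R :=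
  ∑ k : β a, ∑ l : β b, M ⟨a, k⟩ ⟨b, l⟩

def blockConst [DecidableEq ι] [Zero R] (c : ι → R) : Matrix (Σ a, β a) (Σ a, β a) R :=
  of fun x y => if x.1 = y.1 then c x.1 else 0

theorem blockSum_add [AddCommMonoid R] (M N : Matrix (Σ a, β a) (Σ a, β a) R) (a b : ι) :
    blockSum (M + N) a b = blockSum M a b + blockSum N a b := by
  simp only [blockSum, add_apply, sum_add_distrib]

theorem blockSum_one [DecidableEq ι] [∀ a, DecidableEq (β a)] [AddCommMonoidWithOne R]
    (a b : ι) :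
    blockSum (1 : Matrix (Σ a, β a) (Σ a, β a) R) a b
      = if a = b then (Fintype.card (β a) : R) else 0 := by
  unfold blockSum
  split_ifs with hab
  · subst hab
    simp [one_apply]
  · simp [hab]

theorem blockSum_of_eq_apply [DecidableEq ι] [∀ a, DecidableEq (β a)]
    [AddCommMonoidWithOne R] (f : (Σ a, β a) → Σ a, β a) (a b : ι) :
    blockSum (of fun x y => if f x = y then (1 : R) else 0) a b
      = #{k : β a | (f ⟨a, k⟩).1 = b} := by
  have row : ∀ k : β a, ∑ l : β b, (if f ⟨a, k⟩ = ⟨b, l⟩ then (1 : R) else 0)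
      = if (f ⟨a, k⟩).1 = b then 1 else 0 := by
    intro k
    obtain ⟨b', l'⟩ := f ⟨a, k⟩
    by_cases h : b' = b
    · subst h
      simp
    · simp [h]
  simp only [blockSum, of_apply, row, sum_boole]

theorem blockConst_mul_mul_blockConst_apply [Fintype ι] [DecidableEq ι] [Semiring R]
    (c : ι → R) (M : Matrix (Σ a, β a) (Σ a, β a) R) (x y : Σ a, β a) :
    (blockConst c * M * blockConst c : Matrix (Σ a, β a) (Σ a, β a) R) x y
      = c x.1 * blockSum M x.1 y.1 * c y.1 := by
  obtain ⟨a, i⟩ := x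
  obtain ⟨b, j⟩ := y
  simp only [mul_apply, blockConst, of_apply, blockSum, ← univ_sigma_univ, sum_sigma,
    sum_mul, mul_sum, ite_mul, mul_ite, zero_mul, mul_zero, sum_ite_irrel, sum_const_zero,
    sum_ite_eq, sum_ite_eq', mem_univ, if_true]
  exact sum_comm

end Matrix

theorem P_entries_eq_lazy_walk_general
    {V : Type*} [Fintype V] [DecidableEq V]
    (G : SimpleGraph V) [DecidableRel G.Adj]
    (hdeg : ∀ v : V, 0 < G.degree v)
    (rot : RPVert G → RPVert G)
    (hcount : ∀ u v : V,
      ((Finset.univ.filter fun i : Fin (G.degree u) => (rot ⟨u, i⟩).fst = v).card)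
        = if G.Adj u v then 1 else 0)
    (R J P : Matrix (RPVert G) (RPVert G) ℝ)
    (hR : R = Matrix.of fun x y => if rot x = y then (1 : ℝ) else 0)
    (hJ : J = Matrix.of fun x y =>
      if x.1 = y.1 then ((G.degree x.1 : ℝ))⁻¹ else 0)
    (hP : P = (2 : ℝ)⁻¹ • (J * ((1 : Matrix (RPVert G) (RPVert G) ℝ) + R) * J))
    (WG : Matrix V V ℝ)
    (hWG : WG = Matrix.of fun u v =>
      (2 : ℝ)⁻¹ * ((if u = v then (1 : ℝ) else 0)
        + (if G.Adj u v then (1 : ℝ) else 0) / (G.degree u : ℝ))) :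
    ∀ x y : RPVert G, P x y = WG x.1 y.1 / (G.degree y.1 : ℝ) := by
  rintro ⟨u, i⟩ ⟨v, j⟩
  obtain rfl : J = Matrix.blockConst fun u => ((G.degree u : ℝ))⁻¹ := hJ
  subst hR hP hWG
  have hu : (G.degree u : ℝ) ≠ 0 := by exact_mod_cast (hdeg u).ne'
  rw [Matrix.smul_apply, Matrix.blockConst_mul_mul_blockConst_apply, Matrix.blockSum_add,
    Matrix.blockSum_one, Matrix.blockSum_of_eq_apply, hcount, Fintype.card_fin,
    Matrix.of_apply, smul_eq_mul]
  split_ifs <;> push_cast <;> field_simp <;> ring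

/-- Let `R_G` be the rotation-map permutation matrix of `G`, `J_𝓗` the block
diagonal matrix whose block at `u` is the all-`1/deg(u)` matrix, and
`P := (1/2)·J_𝓗(I + R_G)J_𝓗`.  Then `P_{(u,i),(v,j)} = W_G(u,v)/deg_G(v)` where
`W_G = (I + D⁻¹A)/2` is the lazy random walk matrix of `G`. -/
theorem P_entries_eq_lazy_walk
    {V : Type*} [Fintype V] [DecidableEq V]
    (G : SimpleGraph V) [DecidableRel G.Adj]
    (hdeg : ∀ v : V, 0 < G.degree v)
    (rot : RPVert G → RPVert G)
    (hrot : Function.Involutive rot)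
    (hcount : ∀ u v : V,
      ((Finset.univ.filter fun i : Fin (G.degree u) => (rot ⟨u, i⟩).fst = v).card)
        = if G.Adj u v then 1 else 0)
    (R J P : Matrix (RPVert G) (RPVert G) ℝ)
    (hR : R = Matrix.of fun x y => if rot x = y then (1 : ℝ) else 0)
    (hJ : J = Matrix.of fun x y =>
      if x.1 = y.1 then ((G.degree x.1 : ℝ))⁻¹ else 0)
    (hP : P = (2 : ℝ)⁻¹ • (J * ((1 : Matrix (RPVert G) (RPVert G) ℝ) + R) * J))
    (WG : Matrix V V ℝ)
    (hWG : WG = Matrix.of fun u v =>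
      (2 : ℝ)⁻¹ * ((if u = v then (1 : ℝ) else 0)
        + (if G.Adj u v then (1 : ℝ) else 0) / (G.degree u : ℝ))) :
    ∀ x y : RPVert G, P x y = WG x.1 y.1 / (G.degree y.1 : ℝ) :=
  P_entries_eq_lazy_walk_general G hdeg rot hcount R J P hR hJ hP WG hWG
end

section
/- For graphs G = (V,E): if there exist disjoint sets A₁,...,A_s obtained iteratively with A_i ⊆ V_{i-1} := V ∖ (A₁∪...∪A_{i-1}), each satisfying φ_{G[V_{i-1}]}(A_i) ≤ c·φ* (conductance measured in the induced subgraph), then Σ_{i=1}^{s} e(A_i, V∖A_i) ≤ 2c·φ*·vol(A₁∪...∪A_s). -/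
/-!
Split each cut `e(A_i, A_iᶜ)` into the edges staying in `V_{i-1}` and the edges back to
earlier sets `A_j`. Seen from its earlier endpoint, a back edge between `A_j` and `A_i`
(`j < i`) leaves `A_j` inside `V_{j-1}`, so the back edges together count at most
`Σ_j e(A_j, V_{j-1} ∖ A_j)` once more. Hence the total cut is at most
`2 Σ_i e(A_i, V_{i-1} ∖ A_i) ≤ 2cφ* Σ_i vol_{V_{i-1}}(A_i)`, and `vol_{V_{i-1}} ≤ vol` while
the `A_i` are disjoint.
-/

open Finset

section Conductance

variable {V : Type*} [Fintype V] [DecidableEq V] (G : SimpleGraph V) [DecidableRel G.Adj]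

/-- Number of edges of `G` between (disjoint) sets `S` and `T`. -/
def eG (S T : Finset V) : ℕ := ∑ u ∈ S, ∑ v ∈ T, (if G.Adj u v then 1 else 0)

/-- Volume of `T` in `G`. -/
def volG (T : Finset V) : ℕ := ∑ v ∈ T, G.degree v

/-- Volume of `T` inside the induced subgraph `G[S]`:
the sum over `t ∈ T` of the number of neighbors of `t` lying in `S`. -/
def volIn (S T : Finset V) : ℕ := ∑ t ∈ T, (S.filter (G.Adj t)).card

end Conductance

section EdgeCount

variable {V : Type*} (G : SimpleGraph V) [DecidableRel G.Adj]

theorem eG_comm (S T : Finset V) : eG G S T = eG G T S := by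
  rw [eG, Finset.sum_comm]
  simp only [G.adj_comm]
  rfl

theorem eG_mono_right (S : Finset V) {T T' : Finset V} (h : T ⊆ T') :
    eG G S T ≤ eG G S T' :=
  sum_le_sum fun _ _ => sum_le_sum_of_subset h

theorem eG_union_right [DecidableEq V] (S : Finset V) {T T' : Finset V} (h : Disjoint T T') :
    eG G S (T ∪ T') = eG G S T + eG G S T' := by
  simp only [eG, sum_union h, sum_add_distrib]

theorem eG_biUnion_right [DecidableEq V] (S : Finset V) {ι : Type*} {t : Finset ι}
    {f : ι → Finset V} (h : (t : Set ι).PairwiseDisjoint f) :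
    eG G S (t.biUnion f) = ∑ j ∈ t, eG G S (f j) := by
  simp only [eG, sum_biUnion h]
  exact sum_comm

theorem volIn_le_volG [Fintype V] (S T : Finset V) : volIn G S T ≤ volG G T := by
  refine sum_le_sum fun t _ => ?_
  rw [← G.card_neighborFinset_eq_degree, G.neighborFinset_eq_filter]
  exact card_le_card (filter_subset_filter _ (subset_univ S))

theorem volG_biUnion [Fintype V] [DecidableEq V] {ι : Type*} {t : Finset ι} {f : ι → Finset V}
    (h : (t : Set ι).PairwiseDisjoint f) :
    volG G (t.biUnion f) = ∑ i ∈ t, volG G (f i) :=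
  sum_biUnion h

end EdgeCount

namespace Peeling

open Function

variable {V ι : Type*} [DecidableEq V] [Fintype ι] [LinearOrder ι] (A : ι → Finset V)

/-- `A₁ ∪ ⋯ ∪ A_{i-1}`, so that `V_{i-1} = (earlier A i)ᶜ`. -/
def earlier (i : ι) : Finset V := (univ.filter fun j => j < i).biUnion A

variable {A}

theorem subset_earlier {i j : ι} (hji : j < i) : A j ⊆ earlier A i :=
  subset_biUnion_of_mem A (mem_filter.mpr ⟨mem_univ j, hji⟩)

theorem earlier_union_subset_earlier {i j : ι} (hji : j < i) :
    earlier A j ∪ A j ⊆ earlier A i :=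
  union_subset
    (biUnion_subset_biUnion_of_subset_left A
      (monotone_filter_right _ fun _ _ hk => hk.trans hji))
    (subset_earlier hji)

variable (hA : ∀ i, Disjoint (A i) (earlier A i))
include hA

theorem pairwise_disjoint_of_disjoint_earlier : Pairwise (Disjoint on A) := by
  intro i j hij
  rcases hij.lt_or_gt with h | h
  · exact (hA j).symm.mono_left (subset_earlier h)
  · exact (hA i).mono_right (subset_earlier h)

variable [Fintype V]

theorem subset_compl_earlier_sdiff {i j : ι} (hji : j < i) :
    A i ⊆ (earlier A j)ᶜ \ A j := by
  rw [sdiff_eq_inter_compl, ← compl_union, subset_compl_iff_disjoint_right]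
  exact (hA i).mono_right (earlier_union_subset_earlier hji)

variable (G : SimpleGraph V) [DecidableRel G.Adj]

theorem eG_compl_eq (i : ι) :
    eG G (A i) (A i)ᶜ
      = eG G (A i) ((earlier A i)ᶜ \ A i) + ∑ j ∈ univ.filter (· < i), eG G (A i) (A j) := by
  have hsplit : (A i)ᶜ = ((earlier A i)ᶜ \ A i) ∪ earlier A i := by
    ext x
    have : x ∈ A i → x ∉ earlier A i := fun h => disjoint_left.mp (hA i) h
    simp only [mem_compl, mem_union, mem_sdiff]
    tauto
  rw [hsplit, eG_union_right G _ (disjoint_compl_left.mono_left sdiff_subset), earlier,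
    eG_biUnion_right G _ ((pairwise_disjoint_of_disjoint_earlier hA).set_pairwise _)]

theorem sum_eG_earlier_le :
    ∑ i, ∑ j ∈ univ.filter (· < i), eG G (A i) (A j)
      ≤ ∑ j, eG G (A j) ((earlier A j)ᶜ \ A j) := by
  have hswap : ∑ i, ∑ j ∈ univ.filter (· < i), eG G (A i) (A j)
      = ∑ j, eG G (A j) ((univ.filter (j < ·)).biUnion A) := by
    simp only [eG_biUnion_right G _ ((pairwise_disjoint_of_disjoint_earlier hA).set_pairwise _),
      sum_filter]
    rw [sum_comm]
    simp only [eG_comm G (A _) (A _)]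
  rw [hswap]
  exact sum_le_sum fun j _ => eG_mono_right G _ <| biUnion_subset.mpr fun i hi =>
    subset_compl_earlier_sdiff hA (mem_filter.mp hi).2

theorem sum_eG_compl_le_two_mul :
    ∑ i, eG G (A i) (A i)ᶜ ≤ 2 * ∑ i, eG G (A i) ((earlier A i)ᶜ \ A i) := by
  rw [sum_congr rfl fun i _ => eG_compl_eq hA G i, sum_add_distrib, two_mul]
  exact Nat.add_le_add_left (sum_eG_earlier_le hA G) _

end Peeling

/-- Iterative peeling: if disjoint sets `A₁, …, A_s` are obtained with
`A_i ⊆ V_{i-1} := V ∖ (A₁ ∪ ⋯ ∪ A_{i-1})` and each has conductance at most `c·φ*`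
in the induced subgraph `G[V_{i-1}]` (i.e. `e(A_i, V_{i-1}∖A_i) ≤ c·φ*·vol_{V_{i-1}}(A_i)`),
then `Σᵢ e(A_i, V∖A_i) ≤ 2·c·φ*·vol(A₁ ∪ ⋯ ∪ A_s)`. -/
theorem peeling_total_cut_bound
    {V : Type*} [Fintype V] [DecidableEq V]
    (G : SimpleGraph V) [DecidableRel G.Adj]
    (s : ℕ) (A : Fin s → Finset V)
    (Vprev : Fin s → Finset V)
    (hVprev : ∀ i : Fin s,
      Vprev i = Finset.univ \ (Finset.univ.filter fun j : Fin s => j < i).biUnion A)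
    (hA : ∀ i : Fin s, A i ⊆ Vprev i)
    (c φstar : ℝ) (hc : 0 ≤ c) (hφ : 0 ≤ φstar)
    (hcond : ∀ i : Fin s,
      (eG G (A i) (Vprev i \ A i) : ℝ) ≤ c * φstar * volIn G (Vprev i) (A i)) :
    (∑ i : Fin s, (eG G (A i) (A i)ᶜ : ℝ))
      ≤ 2 * c * φstar * volG G (Finset.univ.biUnion A) := by
  obtain rfl : Vprev = fun i => (Peeling.earlier A i)ᶜ :=
    funext fun i => (hVprev i).trans (compl_eq_univ_sdiff _).symm
  have hdisj : ∀ i, Disjoint (A i) (Peeling.earlier A i) :=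
    fun i => subset_compl_iff_disjoint_right.mp (hA i)
  calc ∑ i, (eG G (A i) (A i)ᶜ : ℝ)
      ≤ 2 * ∑ i, (eG G (A i) ((Peeling.earlier A i)ᶜ \ A i) : ℝ) := by
        exact_mod_cast Peeling.sum_eG_compl_le_two_mul hdisj G
    _ ≤ 2 * ∑ i, c * φstar * (volIn G (Peeling.earlier A i)ᶜ (A i) : ℝ) := by
        gcongr with i
        exact hcond i
    _ ≤ 2 * ∑ i, c * φstar * (volG G (A i) : ℝ) := by
        gcongr with i
        exact_mod_cast volIn_le_volG G _ _
    _ = 2 * c * φstar * volG G (univ.biUnion A) := by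
        rw [volG_biUnion G ((Peeling.pairwise_disjoint_of_disjoint_earlier hdisj).set_pairwise _),
          Nat.cast_sum, ← mul_sum]
        ring
end

section
/- Let A_i ⊆ V_{i-1} (in the iterative peeling process) satisfy φ_{V_{i-1}}(A_i) ≤ c₂φ* with c₂φ* ≤ 1/20, and suppose additionally vol_{V_{i-1}}(A_i) ≥ (1 − 10c₂φ*)·vol(A_i) (i.e., index i is 'good'). Then 2e(A_i) ≥ (1 − 11c₂φ*)·vol(A_i) and consequently φ(A_i) ≤ 11c₂φ*, where e(A_i) is the number of edges inside A_i and φ is conductance in the full graph G. -/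
open Finset

/-!
Inside `S`, an edge at a vertex of `A` either stays in `A` or goes to `S \ A`, so
`vol_S(A) = 2e(A) + e(A, S \ A) ≤ 2e(A) + c₂φ*·vol_S(A)`, i.e. `2e(A) ≥ (1 - c₂φ*)·vol_S(A)`.
Goodness of the index then gives `2e(A) ≥ (1 - c₂φ*)(1 - 10c₂φ*)·vol(A) ≥ (1 - 11c₂φ*)·vol(A)`,
and the cut bound follows from `vol(A) = 2e(A) + e(A, Aᶜ)`.
-/

theorem volIn_eq_eG {V : Type*} (G : SimpleGraph V) [DecidableRel G.Adj] (S T : Finset V) :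
    volIn G S T = eG G T S := by
  simp only [volIn, eG, Finset.card_filter]

theorem eG_eq_add_eG_sdiff {V : Type*} [DecidableEq V] (G : SimpleGraph V) [DecidableRel G.Adj]
    (A : Finset V) {S T : Finset V} (hTS : T ⊆ S) :
    eG G A S = eG G A T + eG G A (S \ T) := by
  simp only [eG, ← Finset.sum_add_distrib]
  refine Finset.sum_congr rfl fun u _ => ?_
  rw [← Finset.sum_sdiff hTS, add_comm]

theorem eG_add_eG_compl {V : Type*} [Fintype V] [DecidableEq V] (G : SimpleGraph V)
    [DecidableRel G.Adj] (A B : Finset V) : eG G A B + eG G A Bᶜ = volG G A := by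
  simp only [eG, volG, ← Finset.sum_add_distrib]
  refine Finset.sum_congr rfl fun u _ => ?_
  rw [Finset.sum_add_sum_compl, ← Finset.card_filter]
  simp [SimpleGraph.degree, SimpleGraph.neighborFinset_eq_filter]

theorem good_index_small_conductance_general
    {V : Type*} [Fintype V] [DecidableEq V]
    (G : SimpleGraph V) [DecidableRel G.Adj]
    (S A : Finset V) (hAS : A ⊆ S)
    (c₂ φstar : ℝ) (h20 : c₂ * φstar ≤ 1 / 20)
    (hcond : (eG G A (S \ A) : ℝ) ≤ c₂ * φstar * volIn G S A)
    (hgood : (1 - 10 * (c₂ * φstar)) * (volG G A : ℝ) ≤ (volIn G S A : ℝ)) :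
    (1 - 11 * (c₂ * φstar)) * (volG G A : ℝ) ≤ (eG G A A : ℝ) ∧
      (eG G A Aᶜ : ℝ) ≤ 11 * (c₂ * φstar) * (volG G A : ℝ) := by
  set x := c₂ * φstar
  have hvolIn : (volIn G S A : ℝ) = eG G A A + eG G A (S \ A) := by
    exact_mod_cast (volIn_eq_eG G S A).trans (eG_eq_add_eG_sdiff G A hAS)
  have hvol : (volG G A : ℝ) = eG G A A + eG G A Aᶜ := by
    exact_mod_cast (eG_add_eG_compl G A A).symm
  have hinternal : (1 - 11 * x) * volG G A ≤ eG G A A :=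
    calc (1 - 11 * x) * volG G A
        ≤ (1 - x) * ((1 - 10 * x) * volG G A) := by
          nlinarith [sq_nonneg x, (volG G A).cast_nonneg (α := ℝ)]
      _ ≤ (1 - x) * volIn G S A := mul_le_mul_of_nonneg_left hgood (by linarith)
      _ ≤ eG G A A := by linarith
  exact ⟨hinternal, by linarith⟩

/-- If `A ⊆ S` satisfies `φ_S(A) ≤ c₂φ*` (conductance in the induced subgraph
`G[S]`), `c₂φ* ≤ 1/20`, and `vol_S(A) ≥ (1 − 10c₂φ*)·vol(A)` (index is good),
then `2e(A) ≥ (1 − 11c₂φ*)·vol(A)` and consequently `φ(A) ≤ 11c₂φ*`, i.e.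
`e(A, V∖A) ≤ 11c₂φ*·vol(A)`. -/
theorem good_index_small_conductance
    {V : Type*} [Fintype V] [DecidableEq V]
    (G : SimpleGraph V) [DecidableRel G.Adj]
    (S A : Finset V) (hAS : A ⊆ S)
    (c₂ φstar : ℝ) (h0 : 0 ≤ c₂ * φstar) (h20 : c₂ * φstar ≤ 1 / 20)
    (hcond : (eG G A (S \ A) : ℝ) ≤ c₂ * φstar * volIn G S A)
    (hgood : (1 - 10 * (c₂ * φstar)) * (volG G A : ℝ) ≤ (volIn G S A : ℝ)) :
    (1 - 11 * (c₂ * φstar)) * (volG G A : ℝ) ≤ (eG G A A : ℝ) ∧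
      (eG G A Aᶜ : ℝ) ≤ 11 * (c₂ * φstar) * (volG G A : ℝ) :=
  good_index_small_conductance_general G S A hAS c₂ φstar h20 hcond hgood
end
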